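/- Let X_M and Y_M be two independent multiterminal sources on the same terminal set M (i.e., the tuple (X_i)_{i∈M} is independent of the tuple (Y_i)_{i∈M}), and define the clubbed source Z_i = (X_i, Y_i). Then for every partition P of M with |P| ≥ 2, Δ_Z(P) = Δ_X(P) + Δ_Y(P), where Δ_W(P) = (1/(|P|−1))·(∑_{A ∈ P} H(W_A) − H(W_M)) for W ∈ {X, Y, Z}. Consequently, min_P Δ_Z(P) ≥ min_P Δ_X(P) + min_P Δ_Y(P). -/

import Mathlib

open Finset

/-- The probability that the random variable `X` takes the value `a`. -/
noncomputable def prb {Ω α : Type*} [Fintype Ω] [DecidableEq α]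
    (p : Ω → ℝ) (X : Ω → α) (a : α) : ℝ :=
  ∑ ω ∈ Finset.univ.filter (fun ω => X ω = a), p ω

/-- Shannon entropy of a random variable `X` on a finite probability space. -/
noncomputable def ent {Ω α : Type*} [Fintype Ω] [Fintype α] [DecidableEq α]
    (p : Ω → ℝ) (X : Ω → α) : ℝ :=
  ∑ a : α, Real.negMulLog (prb p X a)

/-- Joint Shannon entropy `H(X_A)` of the collection `(X_i : i ∈ A)`. -/
noncomputable def entS {Ω ι α : Type*} [Fintype Ω] [DecidableEq ι]
    [Fintype α] [DecidableEq α] (p : Ω → ℝ) (X : ι → Ω → α) (A : Finset ι) : ℝ :=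
  ent p (fun ω => fun i : A => X i.1 ω)

/-- `Δ(P) = (1/(|P|−1)) (∑_{A ∈ P} H(X_A) − H(X_M))` for a partition `P` of `M`. -/
noncomputable def dPart {Ω α : Type*} {m : ℕ} [Fintype Ω] [Fintype α] [DecidableEq α]
    (p : Ω → ℝ) (X : Fin m → Ω → α)
    (P : Finpartition (Finset.univ : Finset (Fin m))) : ℝ :=
  (1 / ((P.parts.card : ℝ) - 1)) * (∑ A ∈ P.parts, entS p X A - entS p X Finset.univ)

/-- `Δ(S)` for the singleton partition `S`. -/
noncomputable def dS {Ω α : Type*} {m : ℕ} [Fintype Ω] [Fintype α] [DecidableEq α]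
    (p : Ω → ℝ) (X : Fin m → Ω → α) : ℝ :=
  (1 / ((m : ℝ) - 1)) * (∑ i : Fin m, entS p X {i} - entS p X Finset.univ)

/-- `Δ(P_B)` for the partition `P_B = {Bᶜ} ∪ {{b} : b ∈ B}` (so `|P_B| − 1 = |B|`). -/
noncomputable def dPB {Ω α : Type*} {m : ℕ} [Fintype Ω] [Fintype α] [DecidableEq α]
    (p : Ω → ℝ) (X : Fin m → Ω → α) (B : Finset (Fin m)) : ℝ :=
  (1 / (B.card : ℝ)) *
    (entS p X Bᶜ + ∑ b ∈ B, entS p X {b} - entS p X Finset.univ)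

/-!
Entropy is additive over independent pairs, and independence of the whole sources `X_M`, `Y_M`
passes to the subfamilies `X_A`, `Y_A`. Hence `H(Z_A) = H(X_A) + H(Y_A)` for every `A ⊆ M`, and
`Δ_Z(P) = Δ_X(P) + Δ_Y(P)` because `Δ(P)` is linear in the entropies. Taking infima of this sum
over the finitely many partitions gives the inequality.
-/

def PrbIndep {Ω α β : Type*} [Fintype Ω] [DecidableEq α] [DecidableEq β]
    (p : Ω → ℝ) (X : Ω → α) (Y : Ω → β) : Prop :=
  ∀ a b, prb p (fun ω => (X ω, Y ω)) (a, b) = prb p X a * prb p Y b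

section Entropy

variable {Ω α β γ δ : Type*} [Fintype Ω] [Fintype α] [DecidableEq α] [Fintype β] [DecidableEq β]

lemma sum_prb (p : Ω → ℝ) (X : Ω → α) : ∑ a, prb p X a = ∑ ω, p ω := by
  simpa [prb] using sum_fiberwise univ X p

lemma prb_comp [DecidableEq γ] (p : Ω → ℝ) (X : Ω → α) (e : α → γ) (c : γ) :
    prb p (fun ω => e (X ω)) c = ∑ a ∈ univ.filter (fun a => e a = c), prb p X a := by
  unfold prb
  rw [sum_fiberwise_eq_sum_filter]
  congr 1
  ext ω
  simp

lemma ent_comp_equiv [Fintype γ] [DecidableEq γ] (p : Ω → ℝ) (X : Ω → α) (e : α ≃ γ) :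
    ent p (fun ω => e (X ω)) = ent p X := by
  rw [ent, ent, ← e.sum_comp]
  simp only [prb, e.apply_eq_iff_eq]

lemma PrbIndep.comp [DecidableEq γ] [DecidableEq δ] {p : Ω → ℝ} {X : Ω → α} {Y : Ω → β}
    (h : PrbIndep p X Y) (f : α → γ) (g : β → δ) :
    PrbIndep p (fun ω => f (X ω)) (fun ω => g (Y ω)) := by
  intro c d
  change prb p (fun ω => Prod.map f g (X ω, Y ω)) (c, d) = _
  rw [prb_comp p (fun ω => (X ω, Y ω)) (Prod.map f g), prb_comp, prb_comp, sum_mul_sum,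
    ← sum_product']
  refine sum_congr ?_ fun q _ => h q.1 q.2
  ext q
  simp [Prod.ext_iff]

lemma ent_pair_of_indep {p : Ω → ℝ} (hp1 : ∑ ω, p ω = 1) {X : Ω → α} {Y : Ω → β}
    (h : PrbIndep p X Y) : ent p (fun ω => (X ω, Y ω)) = ent p X + ent p Y := by
  have hX : ∑ a, prb p X a = 1 := by rw [sum_prb, hp1]
  have hY : ∑ b, prb p Y b = 1 := by rw [sum_prb, hp1]
  simp only [ent, Fintype.sum_prod_type, h _ _, Real.negMulLog_mul, sum_add_distrib,
    ← sum_mul, ← mul_sum, hX, hY, one_mul]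

end Entropy

lemma entS_pair_of_indep {Ω ι α β : Type*} [Fintype Ω] [Fintype ι] [DecidableEq ι]
    [Fintype α] [DecidableEq α] [Fintype β] [DecidableEq β] {p : Ω → ℝ} (hp1 : ∑ ω, p ω = 1)
    {X : ι → Ω → α} {Y : ι → Ω → β}
    (h : PrbIndep p (fun ω i => X i ω) (fun ω i => Y i ω)) (A : Finset ι) :
    entS p (fun i ω => (X i ω, Y i ω)) A = entS p X A + entS p Y A := by
  rw [entS, ← ent_comp_equiv p _ (Equiv.arrowProdEquivProdArrow A (fun _ => α) (fun _ => β))]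
  exact ent_pair_of_indep hp1 (h.comp (fun F (i : A) => F i) (fun G (i : A) => G i))

lemma dPart_add_of_entS_add {Ω α β γ : Type*} [Fintype Ω] [Fintype α] [DecidableEq α]
    [Fintype β] [DecidableEq β] [Fintype γ] [DecidableEq γ] {m : ℕ} {p : Ω → ℝ}
    {X : Fin m → Ω → α} {Y : Fin m → Ω → β} {Z : Fin m → Ω → γ}
    (h : ∀ A, entS p Z A = entS p X A + entS p Y A)
    (P : Finpartition (univ : Finset (Fin m))) :
    dPart p Z P = dPart p X P + dPart p Y P := by
  simp only [dPart, h, sum_add_distrib]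
  ring

lemma sInf_add_sInf_le_of_finite {ι : Type*} [Finite ι] (q : ι → Prop) {f g k : ι → ℝ}
    (h : ∀ i, q i → k i = f i + g i) :
    sInf {r | ∃ i, q i ∧ r = f i} + sInf {r | ∃ i, q i ∧ r = g i}
      ≤ sInf {r | ∃ i, q i ∧ r = k i} := by
  have hfin : ∀ v : ι → ℝ, {r | ∃ i, q i ∧ r = v i}.Finite := fun v =>
    (Set.finite_range v).subset (by rintro r ⟨i, -, rfl⟩; exact ⟨i, rfl⟩)
  by_cases hq : ∃ i, q i
  · obtain ⟨i₀, hi₀⟩ := hq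
    have hne : {r | ∃ i, q i ∧ r = k i}.Nonempty := ⟨k i₀, i₀, hi₀, rfl⟩
    obtain ⟨i, hi, hik⟩ := hne.csInf_mem (hfin k)
    rw [hik, h i hi]
    gcongr
    · exact csInf_le (hfin f).bddBelow ⟨i, hi, rfl⟩
    · exact csInf_le (hfin g).bddBelow ⟨i, hi, rfl⟩
  · have hempty : ∀ v : ι → ℝ, {r | ∃ i, q i ∧ r = v i} = ∅ := fun v =>
      Set.eq_empty_of_forall_notMem fun r ⟨i, hi, _⟩ => hq ⟨i, hi⟩
    simp only [hempty, Real.sInf_empty, add_zero, le_refl]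

theorem clubbed_source_delta_general {Ω α β : Type*} [Fintype Ω]
    [Fintype α] [DecidableEq α] [Fintype β] [DecidableEq β] {m : ℕ}
    (p : Ω → ℝ) (hp1 : ∑ ω : Ω, p ω = 1)
    (X : Fin m → Ω → α) (Y : Fin m → Ω → β)
    (hindep : ∀ (f : Fin m → α) (g : Fin m → β),
      prb p (fun ω => ((fun i => X i ω), (fun i => Y i ω))) (f, g)
        = prb p (fun ω => fun i => X i ω) f * prb p (fun ω => fun i => Y i ω) g) :
    (∀ P : Finpartition (Finset.univ : Finset (Fin m)), 2 ≤ P.parts.card →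
      dPart p (fun i ω => (X i ω, Y i ω)) P = dPart p X P + dPart p Y P)
    ∧ sInf {r : ℝ | ∃ P : Finpartition (Finset.univ : Finset (Fin m)),
          2 ≤ P.parts.card ∧ r = dPart p (fun i ω => (X i ω, Y i ω)) P}
      ≥ sInf {r : ℝ | ∃ P : Finpartition (Finset.univ : Finset (Fin m)),
          2 ≤ P.parts.card ∧ r = dPart p X P}
        + sInf {r : ℝ | ∃ P : Finpartition (Finset.univ : Finset (Fin m)),
          2 ≤ P.parts.card ∧ r = dPart p Y P} := by
  have hdelta := dPart_add_of_entS_add (entS_pair_of_indep hp1 hindep)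
  exact ⟨fun P _ => hdelta P, sInf_add_sInf_le_of_finite _ fun P _ => hdelta P⟩

/-- For independent multiterminal sources `X_M` and `Y_M` with clubbed source
`Z_i = (X_i, Y_i)`: `Δ_Z(P) = Δ_X(P) + Δ_Y(P)` for every partition `P` with `|P| ≥ 2`, and
consequently `min_P Δ_Z(P) ≥ min_P Δ_X(P) + min_P Δ_Y(P)`. -/
theorem clubbed_source_delta {Ω α β : Type*} [Fintype Ω]
    [Fintype α] [DecidableEq α] [Fintype β] [DecidableEq β] {m : ℕ}
    (p : Ω → ℝ) (hp0 : ∀ ω, 0 ≤ p ω) (hp1 : ∑ ω : Ω, p ω = 1)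
    (X : Fin m → Ω → α) (Y : Fin m → Ω → β)
    (hindep : ∀ (f : Fin m → α) (g : Fin m → β),
      prb p (fun ω => ((fun i => X i ω), (fun i => Y i ω))) (f, g)
        = prb p (fun ω => fun i => X i ω) f * prb p (fun ω => fun i => Y i ω) g) :
    (∀ P : Finpartition (Finset.univ : Finset (Fin m)), 2 ≤ P.parts.card →
      dPart p (fun i ω => (X i ω, Y i ω)) P = dPart p X P + dPart p Y P)
    ∧ sInf {r : ℝ | ∃ P : Finpartition (Finset.univ : Finset (Fin m)),
          2 ≤ P.parts.card ∧ r = dPart p (fun i ω => (X i ω, Y i ω)) P}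
      ≥ sInf {r : ℝ | ∃ P : Finpartition (Finset.univ : Finset (Fin m)),
          2 ≤ P.parts.card ∧ r = dPart p X P}
        + sInf {r : ℝ | ∃ P : Finpartition (Finset.univ : Finset (Fin m)),
          2 ≤ P.parts.card ∧ r = dPart p Y P} :=
  clubbed_source_delta_general p hp1 X Y hindep
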